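/- arXiv:2005.05245 — 8 statements merged into one kernel-verified Lean document; each statement's English description precedes it below -/
import Mathlib

section
/- Let T ∈ ℕ with T ≥ 1, c_κ ≥ 0, and let κ_j : ℕ → ℝ for j = 0,…,T−1 (with the convention κ_T := κ_0) be sequences satisfying κ_j(t+1) ≤ κ_{j+1}(t) − c_κ · Δκ(t) for all t and all j = 0,…,T−1, where κ(t) := Σ_{j=0}^{T−1} κ_j(t) and Δκ(t) := κ(t+1) − κ(t). Then for all t and all k = 0,…,T−1, κ_{T−1}(t+k+1) ≤ κ_k(t) − c_κ · Σ_{j=0}^{k} Δκ(t+j). -/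
/-! The constraint for `j = T - 1` wraps around to `κ_0`; from there the `k` constraints with
`j < k`, which do not wrap, telescope along the diagonal `j + s = const`. -/

open Finset

theorem le_sub_sum_of_forall_succ_le {α : Type*} [AddCommGroup α] [PartialOrder α]
    [IsOrderedAddMonoid α] (a : ℕ → ℕ → α) (d : ℕ → α) (k : ℕ)
    (h : ∀ t, ∀ j < k, a j (t + 1) ≤ a (j + 1) t - d t) (t : ℕ) :
    a 0 (t + k) ≤ a k t - ∑ j ∈ range k, d (t + j) := by
  induction k generalizing t with
  | zero => simp
  | succ k ih =>
    have hshift := ih (fun s j hj => h s j (by omega)) (t + 1)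
    have hstep := h t k (by omega)
    calc a 0 (t + (k + 1)) = a 0 (t + 1 + k) := by rw [add_right_comm, add_assoc]
      _ ≤ a k (t + 1) - ∑ j ∈ range k, d (t + 1 + j) := hshift
      _ ≤ a (k + 1) t - d t - ∑ j ∈ range k, d (t + 1 + j) := sub_le_sub_right hstep _
      _ = a (k + 1) t - ∑ j ∈ range (k + 1), d (t + j) := by
        rw [sum_range_succ', sub_sub, add_zero, add_comm (d t)]
        simp only [add_right_comm t, add_assoc]

theorem stmt_1_general (T : ℕ) (hT : 1 ≤ T) (cκ : ℝ) (κ : ℕ → ℕ → ℝ)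
    (Δκ : ℕ → ℝ)
    (hrec : ∀ t, ∀ j < T, κ j (t + 1) ≤ κ ((j + 1) % T) t - cκ * Δκ t) :
    ∀ t, ∀ k < T,
      κ (T - 1) (t + k + 1) ≤ κ k t - cκ * ∑ j ∈ Finset.range (k + 1), Δκ (t + j) := by
  intro t k hk
  have hwrap : κ (T - 1) (t + k + 1) ≤ κ 0 (t + k) - cκ * Δκ (t + k) := by
    simpa [Nat.sub_add_cancel hT] using hrec (t + k) (T - 1) (by omega)
  have hchain := le_sub_sum_of_forall_succ_le κ (fun s => cκ * Δκ s) k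
    (fun s j hj => by simpa [Nat.mod_eq_of_lt (show j + 1 < T by omega)] using hrec s j (by omega)) t
  rw [sum_range_succ, mul_add, mul_sum]
  linarith

/-- Recursive telescoping bound (eq. (15)) of Proposition 2: from the one-step
constraints `κ_j(t+1) ≤ κ_{j+1}(t) − c_κ Δκ(t)` (cyclic indices mod `T`) one gets
`κ_{T−1}(t+k+1) ≤ κ_k(t) − c_κ Σ_{j=0}^k Δκ(t+j)` for all `k < T`. -/
theorem stmt_1 (T : ℕ) (hT : 1 ≤ T) (cκ : ℝ) (hcκ : 0 ≤ cκ) (κ : ℕ → ℕ → ℝ)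
    (κtot Δκ : ℕ → ℝ)
    (hκtot : ∀ t, κtot t = ∑ j ∈ Finset.range T, κ j t)
    (hΔ : ∀ t, Δκ t = κtot (t + 1) - κtot t)
    (hrec : ∀ t, ∀ j < T, κ j (t + 1) ≤ κ ((j + 1) % T) t - cκ * Δκ t) :
    ∀ t, ∀ k < T,
      κ (T - 1) (t + k + 1) ≤ κ k t - cκ * ∑ j ∈ Finset.range (k + 1), Δκ (t + j) :=
  stmt_1_general T hT cκ κ Δκ hrec
end

section
/- Under the same assumptions as the previous recursion (κ_j(t+1) ≤ κ_{j+1}(t) − c_κΔκ(t) for j = 0,…,T−1, with κ(t) = Σ_j κ_j(t), Δκ(t) = κ(t+1) − κ(t), κ_T := κ_0, c_κ ≥ 0), one has for every t: Σ_{k=0}^{T−1} κ_{T−1}(t+1+k) ≤ κ(t) + c_κ·T·(κ(t) − κ(t+T)). -/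
/-!
Summing the recursion over `j` and using that `j ↦ (j + 1) % T` permutes `range T` gives
`(1 + c T) Δκ(t) ≤ 0`, so the total `κ` is nonincreasing. Chaining the recursion `k + 1` times
moves the last index `T - 1` down to `k`: `κ_{T-1}(t+1+k) ≤ κ_k(t) - c (κ(t+k+1) - κ(t))`.
Summing over `k < T` and bounding each `κ(t+k+1)` below by `κ(t+T)` gives the claim.
-/

open Finset

theorem Finset.sum_range_comp_succ_mod {M : Type*} [AddCommMonoid M] (T : ℕ) (f : ℕ → M) :
    ∑ j ∈ range T, f ((j + 1) % T) = ∑ j ∈ range T, f j := by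
  rcases T with _ | n
  · rfl
  rw [sum_range_succ, sum_range_succ' f n, Nat.mod_self]
  congr 1
  refine sum_congr rfl fun j hj => ?_
  rw [Nat.mod_eq_of_lt (by simp at hj; omega)]

def CyclicDescent (T : ℕ) (c : ℝ) (κ : ℕ → ℕ → ℝ) (s : ℕ → ℝ) : Prop :=
  ∀ t, ∀ j < T, κ j (t + 1) ≤ κ ((j + 1) % T) t - c * (s (t + 1) - s t)

namespace CyclicDescent

variable {T : ℕ} {c : ℝ} {κ : ℕ → ℕ → ℝ} {s : ℕ → ℝ}

theorem antitone_total (h : CyclicDescent T c κ s) (hc : 0 ≤ c)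
    (hs : ∀ t, s t = ∑ j ∈ range T, κ j t) : Antitone s := by
  refine antitone_nat_of_succ_le fun t => ?_
  have hsum : s (t + 1) ≤ s t - T * (c * (s (t + 1) - s t)) := by
    calc s (t + 1) = ∑ j ∈ range T, κ j (t + 1) := hs _
      _ ≤ ∑ j ∈ range T, (κ ((j + 1) % T) t - c * (s (t + 1) - s t)) :=
          sum_le_sum fun j hj => h t j (mem_range.mp hj)
      _ = s t - T * (c * (s (t + 1) - s t)) := by
          rw [sum_sub_distrib, sum_range_comp_succ_mod T (κ · t), ← hs, sum_const, card_range,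
            nsmul_eq_mul]
  nlinarith [mul_nonneg (Nat.cast_nonneg T : (0 : ℝ) ≤ T) hc]

theorem last_le_of_lt (h : CyclicDescent T c κ s) {k : ℕ} (hk : k < T) (t : ℕ) :
    κ (T - 1) (t + 1 + k) ≤ κ k t - c * (s (t + k + 1) - s t) := by
  induction k generalizing t with
  | zero =>
    have := h t (T - 1) (by omega)
    rwa [Nat.sub_add_cancel (by omega), Nat.mod_self] at this
  | succ k ih =>
    have hstep := h t k (by omega)
    rw [Nat.mod_eq_of_lt hk] at hstep
    have hchain := ih (by omega) (t + 1)
    rw [show t + 1 + 1 + k = t + 1 + (k + 1) by omega,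
      show t + 1 + k + 1 = t + (k + 1) + 1 by omega] at hchain
    linarith

theorem sum_last_le (h : CyclicDescent T c κ s) (hc : 0 ≤ c)
    (hs : ∀ t, s t = ∑ j ∈ range T, κ j t) (t : ℕ) :
    ∑ k ∈ range T, κ (T - 1) (t + 1 + k) ≤ s t + c * T * (s t - s (t + T)) := by
  have hanti := h.antitone_total hc hs
  calc ∑ k ∈ range T, κ (T - 1) (t + 1 + k)
      ≤ ∑ k ∈ range T, (κ k t + c * (s t - s (t + T))) := by
        refine sum_le_sum fun k hk => ?_
        have hk := mem_range.mp hk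
        have hlow : s (t + T) ≤ s (t + k + 1) := hanti (by omega)
        nlinarith [h.last_le_of_lt hk t]
    _ = s t + c * T * (s t - s (t + T)) := by
        rw [sum_add_distrib, ← hs, sum_const, card_range, nsmul_eq_mul]
        ring

end CyclicDescent

theorem stmt_2_general (T : ℕ) (cκ : ℝ) (hcκ : 0 ≤ cκ) (κ : ℕ → ℕ → ℝ)
    (κtot Δκ : ℕ → ℝ)
    (hκtot : ∀ t, κtot t = ∑ j ∈ Finset.range T, κ j t)
    (hΔ : ∀ t, Δκ t = κtot (t + 1) - κtot t)
    (hrec : ∀ t, ∀ j < T, κ j (t + 1) ≤ κ ((j + 1) % T) t - cκ * Δκ t) :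
    ∀ t, ∑ k ∈ Finset.range T, κ (T - 1) (t + 1 + k) ≤
      κtot t + cκ * T * (κtot t - κtot (t + T)) := by
  have hdesc : CyclicDescent T cκ κ κtot := fun t j hj => hΔ t ▸ hrec t j hj
  exact hdesc.sum_last_le hcκ hκtot

/-- T-step summed bound in the proof of Proposition 2:
`Σ_{k=0}^{T−1} κ_{T−1}(t+1+k) ≤ κ(t) + c_κ·T·(κ(t) − κ(t+T))`. -/
theorem stmt_2 (T : ℕ) (hT : 1 ≤ T) (cκ : ℝ) (hcκ : 0 ≤ cκ) (κ : ℕ → ℕ → ℝ)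
    (κtot Δκ : ℕ → ℝ)
    (hκtot : ∀ t, κtot t = ∑ j ∈ Finset.range T, κ j t)
    (hΔ : ∀ t, Δκ t = κtot (t + 1) - κtot t)
    (hrec : ∀ t, ∀ j < T, κ j (t + 1) ≤ κ ((j + 1) % T) t - cκ * Δκ t) :
    ∀ t, ∑ k ∈ Finset.range T, κ (T - 1) (t + 1 + k) ≤
      κtot t + cκ * T * (κtot t - κtot (t + T)) :=
  stmt_2_general T cκ hcκ κ κtot Δκ hκtot hΔ hrec
end

section
/- Let T ≥ 1, and let ℓ : Fin T → ℝ be given (stage costs of a T-periodic reference r_T(0),…,r_T(T−1)), with J_T := Σ_{k=0}^{T−1} ℓ(k). Suppose V_f, V_f⁺ ∈ ℝ satisfy V_f⁺ − V_f ≤ −ℓ_x + ℓ(0), where ℓ_x ∈ ℝ is an arbitrary real number (the stage cost at the current state). Define Ṽ_f := V_f + Σ_{k=0}^{T−2} ((T−1−k)/T)·ℓ(k) and Ṽ_f⁺ := V_f⁺ + Σ_{k=0}^{T−2} ((T−1−k)/T)·ℓ(k+1) (i.e., the same sum evaluated along the cyclically shifted reference). Then Ṽ_f⁺ − Ṽ_f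 ≤ −ℓ_x + J_T / T. -/
/-
Shifting the reference cyclically changes the weighted tail sum by
`Σ_{k<T-1} ((T-1-k)/T)·(ℓ(k+1) - ℓ(k))`, and by summation by parts this equals the average
cost `J_T / T` minus `ℓ(0)`. So the terminal decrease bound `-ℓ_x + ℓ(0)` becomes `-ℓ_x + J_T / T`.
-/

open Finset

theorem sum_range_mul_sub_sub_eq {R : Type*} [CommRing R] (f : ℕ → R) (n : ℕ) :
    ∑ k ∈ range n, ((n : R) - k) * (f (k + 1) - f k)
      = ∑ k ∈ range (n + 1), f k - (n + 1) * f 0 := by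
  induction n with
  | zero => simp
  | succ n ih =>
    have hsplit : ∀ k ∈ range (n + 1),
        (((n + 1 : ℕ) : R) - k) * (f (k + 1) - f k)
          = ((n : R) - k) * (f (k + 1) - f k) + (f (k + 1) - f k) := by
      intro k _
      push_cast
      ring
    rw [sum_congr rfl hsplit, sum_add_distrib, sum_range_succ _ n, ih, sum_range_sub,
      sum_range_succ _ (n + 1)]
    push_cast
    ring

theorem sum_range_pred_weighted_shift_sub {K : Type*} [Field K] [CharZero K] (f : ℕ → K) {T : ℕ}
    (hT : 1 ≤ T) :
    ∑ k ∈ range (T - 1), (((T : K) - 1 - k) / T) * f (k + 1)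
        - ∑ k ∈ range (T - 1), (((T : K) - 1 - k) / T) * f k
      = (∑ k ∈ range T, f k) / T - f 0 := by
  obtain ⟨n, rfl⟩ := Nat.exists_eq_add_of_le' hT
  have hT0 : ((n + 1 : ℕ) : K) ≠ 0 := Nat.cast_ne_zero.mpr n.succ_ne_zero
  have hterm : ∀ k ∈ range n,
      (((n + 1 : ℕ) : K) - 1 - k) / (n + 1 : ℕ) * f (k + 1)
          - (((n + 1 : ℕ) : K) - 1 - k) / (n + 1 : ℕ) * f k
        = ((n : K) - k) * (f (k + 1) - f k) / (n + 1 : ℕ) := by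
    intro k _
    push_cast
    ring
  rw [← sum_sub_distrib, Nat.add_sub_cancel, sum_congr rfl hterm, ← sum_div,
    sum_range_mul_sub_sub_eq]
  field_simp
  push_cast
  ring

/-- Lemma 6 of the paper (modified reference cost). -/
theorem stmt_5 (T : ℕ) (hT : 1 ≤ T) (ℓ : ℕ → ℝ) (Vf Vfp ℓx : ℝ)
    (hdec : Vfp - Vf ≤ -ℓx + ℓ 0) :
    (Vfp + ∑ k ∈ Finset.range (T - 1), (((T : ℝ) - 1 - k) / T) * ℓ (k + 1)) -
        (Vf + ∑ k ∈ Finset.range (T - 1), (((T : ℝ) - 1 - k) / T) * ℓ k) ≤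
      -ℓx + (∑ k ∈ Finset.range T, ℓ k) / T := by
  have hshift := sum_range_pred_weighted_shift_sub ℓ hT
  linarith
end

section
/- Let α₁, α₃ ∈ K∞ (continuous, strictly increasing, unbounded functions ℝ≥0 → ℝ≥0 with value 0 at 0) and let α̲ > 0 and α ≥ α̲. Define Δα := min{α₁(α₃⁻¹(α̲/2)), α̲/2}. Then Δα > 0 and sup_{c ∈ [0, α]} (c − α₁(α₃⁻¹(c))) ≤ α − Δα. -/
/-!
Put `κ := α₁ ∘ α₃⁻¹`, which is strictly increasing and nonnegative on `[0, ∞)`, and `δ := α̲/2`.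
For `c ≤ δ` the bound holds because `c - κ c ≤ c ≤ δ ≤ α - δ`; for `c > δ` because
`κ c ≥ κ δ`. Positivity of the margin is `κ δ > κ 0 ≥ 0`.
-/

open Set

/-- Class-K∞ function: continuous, strictly increasing, unbounded on `[0,∞)`,
vanishing at `0` (and nonnegative on `[0,∞)`). -/
def IsKInfty (f : ℝ → ℝ) : Prop :=
  ContinuousOn f (Set.Ici 0) ∧ StrictMonoOn f (Set.Ici 0) ∧ f 0 = 0 ∧
    (∀ M : ℝ, ∃ x, 0 ≤ x ∧ M ≤ f x) ∧ (∀ x, 0 ≤ x → 0 ≤ f x)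

namespace IsKInfty

variable {f : ℝ → ℝ}

theorem strictMonoOn (hf : IsKInfty f) : StrictMonoOn f (Ici 0) := hf.2.1

theorem nonneg (hf : IsKInfty f) {x : ℝ} (hx : 0 ≤ x) : 0 ≤ f x := hf.2.2.2.2 x hx

end IsKInfty

theorem StrictMonoOn.strictMonoOn_of_rightInvOn {α β : Type*} [LinearOrder α] [Preorder β]
    {f : α → β} {g : β → α} {s : Set α} {t : Set β} (hf : StrictMonoOn f s)
    (hg : MapsTo g t s) (hfg : RightInvOn g f t) : StrictMonoOn g t := fun x hx y hy hxy =>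
  (hf.lt_iff_lt (hg hx) (hg hy)).1 (by rwa [hfg hx, hfg hy])

theorem sub_le_sub_min_of_monotoneOn {κ : ℝ → ℝ} (hκ : MonotoneOn κ (Ici 0))
    (hκ_nonneg : ∀ x, 0 ≤ x → 0 ≤ κ x) {δ α c : ℝ} (hδ : 0 ≤ δ) (hα : 2 * δ ≤ α)
    (hc : c ∈ Icc 0 α) : c - κ c ≤ α - min (κ δ) δ := by
  rcases le_or_gt c δ with hcδ | hδc
  · have := hκ_nonneg c hc.1
    have := min_le_right (κ δ) δ
    linarith
  · have := hκ hδ hc.1 hδc.le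
    have := min_le_left (κ δ) δ
    linarith [hc.2]

theorem stmt_7_general (α₁ α₃ α₃inv : ℝ → ℝ) (h1 : IsKInfty α₁) (h3 : IsKInfty α₃)
    (hinv1 : ∀ x, 0 ≤ x → α₃ (α₃inv x) = x)
    (hinv3 : ∀ x, 0 ≤ x → 0 ≤ α₃inv x)
    (αlow α : ℝ) (hαlow : 0 < αlow) (hα : αlow ≤ α) :
    0 < min (α₁ (α₃inv (αlow / 2))) (αlow / 2) ∧
      ∀ c ∈ Set.Icc (0 : ℝ) α,
        c - α₁ (α₃inv c) ≤ α - min (α₁ (α₃inv (αlow / 2))) (αlow / 2) := by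
  have hκ : StrictMonoOn (α₁ ∘ α₃inv) (Ici 0) :=
    h1.strictMonoOn.comp (h3.strictMonoOn.strictMonoOn_of_rightInvOn hinv3 hinv1) hinv3
  have hκ_nonneg : ∀ x, 0 ≤ x → 0 ≤ α₁ (α₃inv x) := fun x hx => h1.nonneg (hinv3 x hx)
  have hδ : 0 < αlow / 2 := half_pos hαlow
  exact ⟨lt_min ((hκ_nonneg 0 le_rfl).trans_lt (hκ self_mem_Ici hδ.le hδ)) hδ,
    fun c hc => sub_le_sub_min_of_monotoneOn hκ.monotoneOn hκ_nonneg hδ.le (by linarith) hc⟩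

/-- Strict-decrease estimate (eq. (13)) in the proof of Lemma 1. -/
theorem stmt_7 (α₁ α₃ α₃inv : ℝ → ℝ) (h1 : IsKInfty α₁) (h3 : IsKInfty α₃)
    (hinv1 : ∀ x, 0 ≤ x → α₃ (α₃inv x) = x)
    (hinv2 : ∀ x, 0 ≤ x → α₃inv (α₃ x) = x)
    (hinv3 : ∀ x, 0 ≤ x → 0 ≤ α₃inv x)
    (αlow α : ℝ) (hαlow : 0 < αlow) (hα : αlow ≤ α) :
    0 < min (α₁ (α₃inv (αlow / 2))) (αlow / 2) ∧
      ∀ c ∈ Set.Icc (0 : ℝ) α,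
        c - α₁ (α₃inv c) ≤ α - min (α₁ (α₃inv (αlow / 2))) (αlow / 2) :=
  stmt_7_general α₁ α₃ α₃inv h1 h3 hinv1 hinv3 αlow α hαlow hα
end

section
/- Let α₁, α₂, α₃, α₄, α₅ ∈ K∞, α̲ > 0, and consider abstract quantities v = V_δ(x, r, t) ∈ ℝ≥0 with v ≤ α(r) for a terminal-set size function α satisfying α(r) ∈ [α̲, ᾱ] and |α(r) − α(r̃)| ≤ α₅(‖r − r̃‖). Suppose the one-step value v⁺ := V_δ(x⁺, r⁺, t+1) satisfies v⁺ ≤ v − α₁(α₃⁻¹(v)), and that changing the reference costs at most continuity: V_δ(x⁺, r̃, t+1) ≤ v⁺ + α₄(‖r⁺ − r̃‖). Then with Δα := min{α₁(α₃⁻¹(α̲/2)), α̲/2} and ε := (α₄ + α₅)⁻¹(Δα), for every r̃ with ‖r⁺ − r̃‖ ≤ ε it holds that V_δ(x⁺, r̃, t+1) ≤ α(r̃). -/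
open Set

namespace IsKInfty

variable {f : ℝ → ℝ}

theorem monotoneOn (hf : IsKInfty f) : MonotoneOn f (Ici 0) := hf.strictMonoOn.monotoneOn

end IsKInfty

theorem MonotoneOn.of_strictMonoOn_of_rightInvOn {α β : Type*} [LinearOrder α] [Preorder β]
    {f : α → β} {g : β → α} {s : Set α} {t : Set β} (hf : StrictMonoOn f s)
    (hg : MapsTo g t s) (hfg : RightInvOn g f t) : MonotoneOn g t :=
  fun x hx y hy hxy => (hf.le_iff_le (hg hx) (hg hy)).1 (by rwa [hfg hx, hfg hy])

theorem sub_le_sub_min_of_monotoneOn_s8 {σ : ℝ → ℝ} (hσ : MonotoneOn σ (Ici 0))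
    (hσ₀ : ∀ x, 0 ≤ x → 0 ≤ σ x) {a c A : ℝ} (ha : 0 ≤ a) (haA : a + a ≤ A)
    (hc : 0 ≤ c) (hcA : c ≤ A) : c - σ c ≤ A - min (σ a) a := by
  rcases le_or_gt c a with hca | hac
  · linarith [hσ₀ c hc, min_le_right (σ a) a]
  · linarith [hσ ha hc hac.le, min_le_left (σ a) a]

theorem stmt_8_general {E : Type*} [NormedAddCommGroup E]
    (α₁ α₃ α₃inv α₄ α₅ εinv : ℝ → ℝ)
    (h1 : IsKInfty α₁) (h3 : IsKInfty α₃) (h4 : IsKInfty α₄) (h5 : IsKInfty α₅)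
    (hinv1 : ∀ x, 0 ≤ x → α₃ (α₃inv x) = x) (hinv3 : ∀ x, 0 ≤ x → 0 ≤ α₃inv x)
    (hεinv1 : ∀ x, 0 ≤ x → α₄ (εinv x) + α₅ (εinv x) = x)
    (hεinv2 : ∀ x, 0 ≤ x → 0 ≤ εinv x)
    (αlow αhigh : ℝ) (hαlow : 0 < αlow)
    (α : E → ℝ) (hαbd : ∀ r', α r' ∈ Set.Icc αlow αhigh)
    (hαcont : ∀ r' r'', |α r' - α r''| ≤ α₅ ‖r' - r''‖)
    (r rplus : E) (hαshift : α rplus = α r)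
    (v vplus : ℝ) (hv0 : 0 ≤ v) (hvα : v ≤ α r)
    (hdec : vplus ≤ v - α₁ (α₃inv v))
    (Vnext : E → ℝ)
    (hVcont : ∀ rt, Vnext rt ≤ vplus + α₄ ‖rplus - rt‖) :
    ∀ rt : E,
      ‖rplus - rt‖ ≤ εinv (min (α₁ (α₃inv (αlow / 2))) (αlow / 2)) →
        Vnext rt ≤ α rt := by
  intro rt hrt
  set Δ := min (α₁ (α₃inv (αlow / 2))) (αlow / 2)
  set ε := εinv Δ
  have hhalf : 0 ≤ αlow / 2 := by positivity
  have hΔ : 0 ≤ Δ := le_min (h1.nonneg (hinv3 _ hhalf)) hhalf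
  have hε : 0 ≤ ε := hεinv2 Δ hΔ
  have hd : ‖rplus - rt‖ ∈ Ici 0 := norm_nonneg _
  have hσ : MonotoneOn (α₁ ∘ α₃inv) (Ici 0) :=
    h1.monotoneOn.comp (.of_strictMonoOn_of_rightInvOn h3.strictMonoOn hinv3 hinv1) hinv3
  have hmargin : vplus ≤ α rplus - Δ := by
    rw [hαshift]
    refine hdec.trans (sub_le_sub_min_of_monotoneOn_s8 hσ (fun x hx => h1.nonneg (hinv3 x hx))
      hhalf ?_ hv0 hvα)
    linarith [(hαbd r).1]
  calc Vnext rt ≤ vplus + α₄ ‖rplus - rt‖ := hVcont rt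
    _ ≤ (α rplus - Δ) + α₄ ε := add_le_add hmargin (h4.monotoneOn hd hε hrt)
    _ = α rplus - α₅ ε := by linarith [hεinv1 Δ hΔ]
    _ ≤ α rplus - α₅ ‖rplus - rt‖ := sub_le_sub_left (h5.monotoneOn hd hε hrt) _
    _ ≤ α rt := by linarith [(abs_le.1 (hαcont rplus rt)).2]

/-- Lemma 1 of the paper (invariance of the terminal sublevel set under small
reference changes), abstracted. -/
theorem stmt_8 {E : Type*} [NormedAddCommGroup E]
    (α₁ α₃ α₃inv α₄ α₅ εinv : ℝ → ℝ)
    (h1 : IsKInfty α₁) (h3 : IsKInfty α₃) (h4 : IsKInfty α₄) (h5 : IsKInfty α₅)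
    (hinv1 : ∀ x, 0 ≤ x → α₃ (α₃inv x) = x) (hinv3 : ∀ x, 0 ≤ x → 0 ≤ α₃inv x)
    (hεinv1 : ∀ x, 0 ≤ x → α₄ (εinv x) + α₅ (εinv x) = x)
    (hεinv2 : ∀ x, 0 ≤ x → 0 ≤ εinv x)
    (αlow αhigh : ℝ) (hαlow : 0 < αlow)
    (α : E → ℝ) (hαbd : ∀ r', α r' ∈ Set.Icc αlow αhigh)
    (hαcont : ∀ r' r'', |α r' - α r''| ≤ α₅ ‖r' - r''‖)
    (r rplus : E) (hαshift : α rplus = α r)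
    (v vplus : ℝ) (hv0 : 0 ≤ v) (hvα : v ≤ α r)
    (hdec : vplus ≤ v - α₁ (α₃inv v))
    (Vnext : E → ℝ) (hVr : Vnext rplus = vplus)
    (hVcont : ∀ rt, Vnext rt ≤ vplus + α₄ ‖rplus - rt‖) :
    ∀ rt : E,
      ‖rplus - rt‖ ≤ εinv (min (α₁ (α₃inv (αlow / 2))) (αlow / 2)) →
        Vnext rt ≤ α rt :=
  stmt_8_general α₁ α₃ α₃inv α₄ α₅ εinv h1 h3 h4 h5 hinv1 hinv3 hεinv1 hεinv2 αlow αhigh hαlow α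
    hαbd hαcont r rplus hαshift v vplus hv0 hvα hdec Vnext hVcont
end

section
/- Let T ≥ 1 and let A_0, …, A_{T−1} ∈ ℝ^{n×n}, and suppose there exist symmetric positive definite matrices P_0, …, P_T = P_0 ∈ ℝ^{n×n} and ε > 0 such that A_jᵀ P_{j+1} A_j − P_j ⪯ −ε·Iₙ for j = 0, …, T−1. Then the matrix Iₙ − (A_{T−1}·…·A_1·A_0)ᵀ is invertible, and consequently for every choice of vectors g_0, …, g_{T−1} ∈ ℝⁿ there exists a unique T-periodic solution p_0, …, p_{T−1} (with p_T := p_0) of the adjoint recursion A_jᵀ p_{j+1} = p_j − g_j, j = 0, …, T−1. -/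
open Matrix Finset

/-!
If `Φ v = v` for the monodromy matrix `Φ = A (T - 1) * ⋯ * A 0`, the Lyapunov function
`V j x = xᵀ P j x` drops by at least `ε ‖x j‖²` at each step of the trajectory
`x j = A (j - 1) * ⋯ * A 0 * v`, yet returns to its initial value after one period because
`x T = v` and `P T = P 0`; hence `v = 0`, and `1 - Φ` and `1 - Φᵀ` are invertible.
A periodic solution of the homogeneous adjoint recursion satisfies `p 0 = Φᵀ p 0`, so `p 0 = 0`,
and then every `p j` vanishes by running the recursion backwards. The periodic adjoint operator
is therefore injective, hence bijective on the finite-dimensional space of periodic sequences.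
-/

namespace PeriodicLyapunov

variable {ι : Type*} [Fintype ι] {T : ℕ}

def periodicAdjoint (A : ℕ → Matrix ι ι ℝ) (hT : 0 < T) :
    (Fin T → ι → ℝ) →ₗ[ℝ] (Fin T → ι → ℝ) where
  toFun p j := p j - (A j)ᵀ *ᵥ p ⟨(j + 1) % T, Nat.mod_lt _ hT⟩
  map_add' p q := by
    funext j
    simp only [Pi.add_apply, mulVec_add]
    abel
  map_smul' c p := by
    funext j
    simp only [Pi.smul_apply, mulVec_smul, smul_sub, RingHom.id_apply]

lemma periodicAdjoint_eq_iff {A : ℕ → Matrix ι ι ℝ} (hT : 0 < T) (p g : Fin T → ι → ℝ) :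
    periodicAdjoint A hT p = g ↔
      ∀ j : Fin T, (A j)ᵀ *ᵥ p ⟨(j + 1) % T, Nat.mod_lt _ hT⟩ = p j - g j := by
  refine funext_iff.trans (forall_congr' fun j => ?_)
  change p j - _ = g j ↔ _
  rw [sub_eq_iff_eq_add, eq_sub_iff_add_eq, add_comm, eq_comm]

variable [DecidableEq ι]

/-- `monodromy A k = A (k - 1) * ⋯ * A 0`. -/
def monodromy (A : ℕ → Matrix ι ι ℝ) (k : ℕ) : Matrix ι ι ℝ :=
  (List.ofFn fun i : Fin k => A (k - 1 - i)).prod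

@[simp]
lemma monodromy_zero (A : ℕ → Matrix ι ι ℝ) : monodromy A 0 = 1 := rfl

lemma monodromy_succ (A : ℕ → Matrix ι ι ℝ) (k : ℕ) :
    monodromy A (k + 1) = A k * monodromy A k := by
  simp only [monodromy, List.ofFn_succ, List.prod_cons, Fin.val_zero, Fin.val_succ]
  congr 3
  funext i; congr 1; omega

lemma dotProduct_mulVec_add_le_of_posSemidef {P Q A : Matrix ι ι ℝ} {ε : ℝ}
    (h : (P - Aᵀ * Q * A - ε • 1).PosSemidef) (x : ι → ℝ) :
    (A *ᵥ x) ⬝ᵥ (Q *ᵥ (A *ᵥ x)) + ε * (x ⬝ᵥ x) ≤ x ⬝ᵥ (P *ᵥ x) := by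
  have h := h.dotProduct_mulVec_nonneg x
  simp only [star_trivial, sub_mulVec, smul_mulVec, one_mulVec, ← mulVec_mulVec,
    dotProduct_sub, dotProduct_smul, smul_eq_mul, dotProduct_mulVec x (Aᵀ), vecMul_transpose] at h
  linarith

variable {A P : ℕ → Matrix ι ι ℝ} {ε : ℝ}

lemma lyapunov_sum_le
    (hLyap : ∀ j < T, (P j - (A j)ᵀ * P (j + 1) * A j - ε • 1).PosSemidef) (v : ι → ℝ) :
    ∀ k ≤ T, (monodromy A k *ᵥ v) ⬝ᵥ (P k *ᵥ (monodromy A k *ᵥ v)) +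
        ε * ∑ i ∈ range k, (monodromy A i *ᵥ v) ⬝ᵥ (monodromy A i *ᵥ v) ≤ v ⬝ᵥ (P 0 *ᵥ v)
  | 0, _ => by simp
  | k + 1, hk => by
    have hstep := dotProduct_mulVec_add_le_of_posSemidef (hLyap k hk) (monodromy A k *ᵥ v)
    have ih := lyapunov_sum_le hLyap v k (Nat.le_of_succ_le hk)
    rw [sum_range_succ, monodromy_succ, ← mulVec_mulVec]
    linarith

lemma eq_zero_of_monodromy_mulVec_eq_self (hT : 0 < T) (hPT : P T = P 0) (hε : 0 < ε)
    (hLyap : ∀ j < T, (P j - (A j)ᵀ * P (j + 1) * A j - ε • 1).PosSemidef) {v : ι → ℝ}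
    (hv : monodromy A T *ᵥ v = v) : v = 0 := by
  have hsum := lyapunov_sum_le hLyap v T le_rfl
  rw [hv, hPT] at hsum
  have hle : v ⬝ᵥ v ≤ ∑ i ∈ range T, (monodromy A i *ᵥ v) ⬝ᵥ (monodromy A i *ᵥ v) := by
    simpa using single_le_sum (fun i _ => dotProduct_self_star_nonneg (monodromy A i *ᵥ v))
      (mem_range.2 hT)
  exact dotProduct_self_eq_zero.1 <|
    le_antisymm (by nlinarith) (dotProduct_self_star_nonneg v)

lemma isUnit_one_sub_monodromy_transpose (hT : 0 < T) (hPT : P T = P 0) (hε : 0 < ε)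
    (hLyap : ∀ j < T, (P j - (A j)ᵀ * P (j + 1) * A j - ε • 1).PosSemidef) :
    IsUnit (1 - (monodromy A T)ᵀ) := by
  rw [← transpose_one, ← transpose_sub, isUnit_transpose, ← mulVec_injective_iff_isUnit]
  intro v w hvw
  have hfix : (1 - monodromy A T) *ᵥ (v - w) = 0 := by rw [mulVec_sub, hvw, sub_self]
  rw [sub_mulVec, one_mulVec, sub_eq_zero, eq_comm] at hfix
  exact sub_eq_zero.1 (eq_zero_of_monodromy_mulVec_eq_self hT hPT hε hLyap hfix)

lemma eq_zero_of_adjoint_recursion (hU : IsUnit (1 - (monodromy A T)ᵀ)) {q : ℕ → ι → ℝ}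
    (hq : ∀ j < T, q j = (A j)ᵀ *ᵥ q (j + 1)) (hqT : q T = q 0) {j : ℕ} (hj : j ≤ T) :
    q j = 0 := by
  have hchain : ∀ k ≤ T, q 0 = (monodromy A k)ᵀ *ᵥ q k := by
    intro k hk
    induction k with
    | zero => simp
    | succ k ih =>
      rw [ih (Nat.le_of_succ_le hk), hq k hk, monodromy_succ, transpose_mul, ← mulVec_mulVec]
  have hq0 : q 0 = 0 := by
    refine mulVec_injective_iff_isUnit.2 hU ?_
    rw [mulVec_zero, sub_mulVec, one_mulVec, sub_eq_zero]
    exact (hchain T le_rfl).trans (by rw [hqT])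
  refine Nat.decreasingInduction (motive := fun j _ => q j = 0) ?_ (hqT.trans hq0) hj
  intro k hk ih
  rw [hq k hk, ih, mulVec_zero]

lemma periodicAdjoint_injective (hT : 0 < T) (hU : IsUnit (1 - (monodromy A T)ᵀ)) :
    Function.Injective (periodicAdjoint A hT) := by
  rw [← LinearMap.ker_eq_bot, LinearMap.ker_eq_bot']
  intro p hp
  set q : ℕ → ι → ℝ := fun j => p ⟨j % T, Nat.mod_lt _ hT⟩
  have hq : ∀ j < T, q j = (A j)ᵀ *ᵥ q (j + 1) := by
    intro j hj
    have := (periodicAdjoint_eq_iff hT p 0).1 hp ⟨j, hj⟩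
    simpa [q, Nat.mod_eq_of_lt hj] using this.symm
  funext j
  simpa [q, Nat.mod_eq_of_lt j.isLt] using
    eq_zero_of_adjoint_recursion hU hq (by simp [q]) j.isLt.le

end PeriodicLyapunov

theorem stmt_11_general (n T : ℕ) (hT : 0 < T) (A P : ℕ → Matrix (Fin n) (Fin n) ℝ)
    (hPT : P T = P 0) (ε : ℝ) (hε : 0 < ε)
    (hLyap : ∀ j < T,
      (P j - (A j)ᵀ * P (j + 1) * A j - ε • (1 : Matrix (Fin n) (Fin n) ℝ)).PosSemidef) :
    IsUnit (1 - ((List.ofFn fun i : Fin T => A (T - 1 - (i : ℕ))).prod)ᵀ) ∧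
      ∀ g : ℕ → (Fin n → ℝ), ∃! p : Fin T → (Fin n → ℝ),
        ∀ j : Fin T,
          (A (j : ℕ))ᵀ *ᵥ p ⟨((j : ℕ) + 1) % T, Nat.mod_lt _ hT⟩ = p j - g (j : ℕ) := by
  have hU := PeriodicLyapunov.isUnit_one_sub_monodromy_transpose hT hPT hε hLyap
  refine ⟨hU, fun g => ?_⟩
  have hinj := PeriodicLyapunov.periodicAdjoint_injective hT hU
  have hbij : Function.Bijective (PeriodicLyapunov.periodicAdjoint A hT) :=
    ⟨hinj, LinearMap.injective_iff_surjective.1 hinj⟩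
  exact (existsUnique_congr fun p => PeriodicLyapunov.periodicAdjoint_eq_iff hT p _).1
    (hbij.existsUnique fun j => g j)

/-- Part I of the proof of Proposition 4: the periodic Lyapunov inequality implies
invertibility of `I − Φᵀ` (monodromy matrix `Φ = A_{T−1}⋯A_0`), hence the periodic
adjoint recursion has a unique solution. -/
theorem stmt_11 (n T : ℕ) (hT : 0 < T) (A P : ℕ → Matrix (Fin n) (Fin n) ℝ)
    (hP : ∀ j ≤ T, (P j).PosDef) (hPT : P T = P 0) (ε : ℝ) (hε : 0 < ε)
    (hLyap : ∀ j < T,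
      (P j - (A j)ᵀ * P (j + 1) * A j - ε • (1 : Matrix (Fin n) (Fin n) ℝ)).PosSemidef) :
    IsUnit (1 - ((List.ofFn fun i : Fin T => A (T - 1 - (i : ℕ))).prod)ᵀ) ∧
      ∀ g : ℕ → (Fin n → ℝ), ∃! p : Fin T → (Fin n → ℝ),
        ∀ j : Fin T,
          (A (j : ℕ))ᵀ *ᵥ p ⟨((j : ℕ) + 1) % T, Nat.mod_lt _ hT⟩ = p j - g (j : ℕ) :=
  stmt_11_general n T hT A P hPT ε hε hLyap
end

section
/- Let T ≥ 1, A_0, …, A_{T−1} ∈ ℝ^{n×n} with monodromy matrix Φ := A_{T−1}⋯A_1·A_0 such that I − Φᵀ is invertible, and let g_0, …, g_{T−1} ∈ ℝⁿ. Define Ā(k) := A_{k−1}⋯A_0 for k ≥ 1 and Ā(0) := I. Then a vector p_0 ∈ ℝⁿ extends to a solution (p_0, …, p_{T−1}, p_T = p_0) of the recursion A_jᵀ p_{j+1} = p_j − g_j (j = 0, …, T−1) if and only if (I − Ā(T)ᵀ)·p_0 = Σ_{j=0}^{T−1} Ā(j)ᵀ·g_j. -/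
open Matrix

/-!
Forward substitution along the recursion `A_jᵀ p_{j+1} = p_j - g_j` gives
`p_0 = Ā(T)ᵀ p_T + Σ_{j<T} Ā(j)ᵀ g_j` for every solution. Periodicity `p_T = p_0` turns this
into the compressed equation; conversely, the recursion can always be solved backwards from
`p_T := p_0`, and the compressed equation then forces the resulting `p_0` to be the given one.
-/

theorem List.prod_ofFn_sub_succ {M : Type*} [Monoid M] (f : ℕ → M) (k : ℕ) :
    (List.ofFn fun i : Fin (k + 1) => f (k + 1 - 1 - i)).prod =
      f k * (List.ofFn fun i : Fin k => f (k - 1 - i)).prod := by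
  rw [List.ofFn_succ, List.prod_cons]
  congr 3 with i
  rw [Fin.val_succ]
  congr 1
  omega

theorem exists_backward_recursion {X : Type*} (F : ℕ → X → X) (T : ℕ) (x : X) :
    ∃ p : ℕ → X, p T = x ∧ ∀ j < T, p j = F j (p (j + 1)) := by
  induction T generalizing F with
  | zero => exact ⟨fun _ => x, rfl, fun j hj => absurd hj (Nat.not_lt_zero j)⟩
  | succ T ih =>
    obtain ⟨p, hpT, hp⟩ := ih fun j => F (j + 1)
    refine ⟨fun j => Nat.casesOn j (F 0 (p 0)) p, hpT, ?_⟩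
    rintro (_ | j) hj
    · rfl
    · exact hp j (Nat.succ_lt_succ_iff.mp hj)

section AdjointRecursion

variable {ι R : Type*} [Fintype ι] [DecidableEq ι] [CommRing R] {A Abar : ℕ → Matrix ι ι R}
  {g p : ℕ → ι → R}

theorem eq_transpose_mulVec_add_sum_of_adjoint_recursion (hAbar0 : Abar 0 = 1)
    (hAbarS : ∀ k, Abar (k + 1) = A k * Abar k) {m : ℕ}
    (hp : ∀ j < m, (A j)ᵀ *ᵥ p (j + 1) = p j - g j) :
    p 0 = (Abar m)ᵀ *ᵥ p m + ∑ i ∈ Finset.range m, (Abar i)ᵀ *ᵥ g i := by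
  induction m with
  | zero => simp [hAbar0]
  | succ m ih =>
    rw [ih fun j hj => hp j (hj.trans m.lt_succ_self), hAbarS, transpose_mul,
      ← mulVec_mulVec, hp m m.lt_succ_self, mulVec_sub, Finset.sum_range_succ]
    abel

end AdjointRecursion

theorem stmt_12_general (n T : ℕ) (A : ℕ → Matrix (Fin n) (Fin n) ℝ)
    (g : ℕ → (Fin n → ℝ)) (Abar : ℕ → Matrix (Fin n) (Fin n) ℝ)
    (hAbar : ∀ k, Abar k = (List.ofFn fun i : Fin k => A (k - 1 - (i : ℕ))).prod)
    (p0 : Fin n → ℝ) :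
    (∃ p : ℕ → (Fin n → ℝ), p 0 = p0 ∧ p T = p0 ∧
        ∀ j < T, (A j)ᵀ *ᵥ p (j + 1) = p j - g j) ↔
      (1 - (Abar T)ᵀ) *ᵥ p0 = ∑ j ∈ Finset.range T, (Abar j)ᵀ *ᵥ g j := by
  have hAbar0 : Abar 0 = 1 := by simp [hAbar]
  have hAbarS (k : ℕ) : Abar (k + 1) = A k * Abar k := by
    rw [hAbar, hAbar, List.prod_ofFn_sub_succ]
  rw [sub_mulVec, one_mulVec]
  constructor
  · rintro ⟨p, hp0, hpT, hp⟩
    have h := eq_transpose_mulVec_add_sum_of_adjoint_recursion hAbar0 hAbarS hp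
    rw [hp0, hpT] at h
    rwa [sub_eq_iff_eq_add']
  · intro h
    obtain ⟨p, hpT, hp⟩ := exists_backward_recursion (fun j v => (A j)ᵀ *ᵥ v + g j) T p0
    have hrec : ∀ j < T, (A j)ᵀ *ᵥ p (j + 1) = p j - g j := fun j hj => by
      rw [hp j hj, add_sub_cancel_right]
    refine ⟨p, ?_, hpT, hrec⟩
    rw [eq_transpose_mulVec_add_sum_of_adjoint_recursion hAbar0 hAbarS hrec, hpT, ← h,
      add_sub_cancel]

/-- Compressed adjoint equation (Remark 4, eq. (30)): `p_0` extends to a `T`-periodic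
solution of the adjoint recursion iff `(I − Ā(T)ᵀ) p_0 = Σ_{j<T} Ā(j)ᵀ g_j`. -/
theorem stmt_12 (n T : ℕ) (hT : 0 < T) (A : ℕ → Matrix (Fin n) (Fin n) ℝ)
    (g : ℕ → (Fin n → ℝ)) (Abar : ℕ → Matrix (Fin n) (Fin n) ℝ)
    (hAbar : ∀ k, Abar k = (List.ofFn fun i : Fin k => A (k - 1 - (i : ℕ))).prod)
    (hinv : IsUnit (1 - (Abar T)ᵀ)) (p0 : Fin n → ℝ) :
    (∃ p : ℕ → (Fin n → ℝ), p 0 = p0 ∧ p T = p0 ∧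
        ∀ j < T, (A j)ᵀ *ᵥ p (j + 1) = p j - g j) ↔
      (1 - (Abar T)ᵀ) *ᵥ p0 = ∑ j ∈ Finset.range T, (Abar j)ᵀ *ᵥ g j :=
  stmt_12_general n T A g Abar hAbar p0
end

section
/- Let P, P⁺ ∈ ℝ^{n×n} be symmetric, Q ∈ ℝ^{n×n} symmetric, A ∈ ℝ^{n×n}, ε̃ > 0, with Aᵀ P⁺ A − P ⪯ −Q − ε̃·Iₙ. Let Φ : ℝⁿ → ℝⁿ satisfy ‖Φ(d)‖ ≤ L·‖d‖ for all d with ‖d‖_P² ≤ α, for a constant L ≥ 0. Then for L sufficiently small (explicitly, whenever 2L·‖P⁺‖·‖A‖ + L²·‖P⁺‖ ≤ ε̃), every d with ‖d‖_P² ≤ α satisfies ‖A·d + Φ(d)‖_{P⁺}² − ‖d‖_P² ≤ −‖d‖_Q², where ‖v‖_M² := vᵀ M v. -/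
/-!
The excess of the `P⁺`-quadratic form at `A d + Φ d` over its value at `A d` is at most
`‖P⁺‖ (2 ‖A d‖ ‖Φ d‖ + ‖Φ d‖²) ≤ (2 L ‖P⁺‖ ‖A‖ + L² ‖P⁺‖) ‖d‖²`, and this is absorbed by the
margin `ε̃ ‖d‖²` of the linear Lyapunov inequality.
-/

open scoped InnerProductSpace

section QuadraticForm

variable {E : Type*} [NormedAddCommGroup E] [InnerProductSpace ℝ E]

theorem ContinuousLinearMap.inner_apply_le_opNorm (T : E →L[ℝ] E) (u v : E) :
    ⟪u, T v⟫_ℝ ≤ ‖T‖ * ‖u‖ * ‖v‖ :=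
  calc ⟪u, T v⟫_ℝ ≤ ‖u‖ * ‖T v‖ := real_inner_le_norm _ _
    _ ≤ ‖u‖ * (‖T‖ * ‖v‖) := by gcongr; exact T.le_opNorm v
    _ = ‖T‖ * ‖u‖ * ‖v‖ := by ring

theorem ContinuousLinearMap.inner_add_apply_add_sub_le (T : E →L[ℝ] E) (x y : E) :
    ⟪x + y, T (x + y)⟫_ℝ - ⟪x, T x⟫_ℝ ≤ ‖T‖ * (2 * ‖x‖ * ‖y‖ + ‖y‖ ^ 2) := by
  have expand : ⟪x + y, T (x + y)⟫_ℝ - ⟪x, T x⟫_ℝ = ⟪x, T y⟫_ℝ + ⟪y, T x⟫_ℝ + ⟪y, T y⟫_ℝ := by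
    simp only [map_add, inner_add_left, inner_add_right]
    ring
  rw [expand]
  linarith [T.inner_apply_le_opNorm x y, T.inner_apply_le_opNorm y x,
    T.inner_apply_le_opNorm y y]

end QuadraticForm

theorem stmt_14_general {n : ℕ}
    (P Pp Q A : EuclideanSpace ℝ (Fin n) →L[ℝ] EuclideanSpace ℝ (Fin n))
    (εt : ℝ)
    (hLyap : ∀ h, ⟪A h, Pp (A h)⟫_ℝ - ⟪h, P h⟫_ℝ ≤ -⟪h, Q h⟫_ℝ - εt * ‖h‖ ^ 2)
    (Φ : EuclideanSpace ℝ (Fin n) → EuclideanSpace ℝ (Fin n))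
    (L α : ℝ)
    (hΦ : ∀ d, ⟪d, P d⟫_ℝ ≤ α → ‖Φ d‖ ≤ L * ‖d‖)
    (hLsmall : 2 * L * ‖Pp‖ * ‖A‖ + L ^ 2 * ‖Pp‖ ≤ εt) :
    ∀ d, ⟪d, P d⟫_ℝ ≤ α →
      ⟪A d + Φ d, Pp (A d + Φ d)⟫_ℝ - ⟪d, P d⟫_ℝ ≤ -⟪d, Q d⟫_ℝ := by
  intro d hd
  have hΦd : ‖Φ d‖ ≤ L * ‖d‖ := hΦ d hd
  have hAd : ‖A d‖ ≤ ‖A‖ * ‖d‖ := A.le_opNorm d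
  have perturbation : ⟪A d + Φ d, Pp (A d + Φ d)⟫_ℝ - ⟪A d, Pp (A d)⟫_ℝ ≤ εt * ‖d‖ ^ 2 :=
    calc _ ≤ ‖Pp‖ * (2 * ‖A d‖ * ‖Φ d‖ + ‖Φ d‖ ^ 2) := Pp.inner_add_apply_add_sub_le _ _
      _ ≤ ‖Pp‖ * (2 * (‖A‖ * ‖d‖) * (L * ‖d‖) + (L * ‖d‖) ^ 2) := by gcongr
      _ = (2 * L * ‖Pp‖ * ‖A‖ + L ^ 2 * ‖Pp‖) * ‖d‖ ^ 2 := by ring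
      _ ≤ εt * ‖d‖ ^ 2 := by gcongr
  linarith [hLyap d]

/-- Local nonlinear Lyapunov decrease estimate (eq. (28)) in the proof of Proposition 4,
with matrices represented as linear operators on Euclidean space (so that `‖·‖` is the
spectral norm). -/
theorem stmt_14 {n : ℕ}
    (P Pp Q A : EuclideanSpace ℝ (Fin n) →L[ℝ] EuclideanSpace ℝ (Fin n))
    (hPsym : ∀ x y, ⟪P x, y⟫_ℝ = ⟪x, P y⟫_ℝ)
    (hPpsym : ∀ x y, ⟪Pp x, y⟫_ℝ = ⟪x, Pp y⟫_ℝ)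
    (hQsym : ∀ x y, ⟪Q x, y⟫_ℝ = ⟪x, Q y⟫_ℝ)
    (εt : ℝ) (hεt : 0 < εt)
    (hLyap : ∀ h, ⟪A h, Pp (A h)⟫_ℝ - ⟪h, P h⟫_ℝ ≤ -⟪h, Q h⟫_ℝ - εt * ‖h‖ ^ 2)
    (Φ : EuclideanSpace ℝ (Fin n) → EuclideanSpace ℝ (Fin n))
    (L α : ℝ) (hL0 : 0 ≤ L)
    (hΦ : ∀ d, ⟪d, P d⟫_ℝ ≤ α → ‖Φ d‖ ≤ L * ‖d‖)
    (hLsmall : 2 * L * ‖Pp‖ * ‖A‖ + L ^ 2 * ‖Pp‖ ≤ εt) :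
    ∀ d, ⟪d, P d⟫_ℝ ≤ α →
      ⟪A d + Φ d, Pp (A d + Φ d)⟫_ℝ - ⟪d, P d⟫_ℝ ≤ -⟪d, Q d⟫_ℝ :=
  stmt_14_general P Pp Q A εt hLyap Φ L α hΦ hLsmall
end
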